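/- Suppose g^{μν} p_μ p_ν = m² identically on ℝ⁴ with m > 0, and let x : I → ℝ⁴ be an integral curve of p^μ/m, i.e. dx^μ/ds = p^μ(x(s))/m. Then x satisfies the Lorentz force equation d²x^λ/ds² + Γ^λ_{μν}(x) (dx^μ/ds)(dx^ν/ds) = (q/m) g^{λγ} F_{γν} dx^ν/ds for every λ, and s is the proper-time parametrization: g_{μν}(x(s)) (dx^μ/ds)(dx^ν/ds) = 1 for all s. -/

import Mathlib

/-
Put `π = p / m`. Then the velocity field of the curve is `u = g⁻¹ π`, and the mass shell says
`π · g⁻¹ π = 1`. Along the curve, `ẍ = u^μ ∂_μ (g⁻¹ π) = g⁻¹ (u^μ ∂_μ π - u^μ (∂_μ g) u)`. In the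
contracted Christoffel term `Γ(u, u) = g⁻¹ (u^μ (∂_μ g) u - ½ u (∂_ρ g) u)` the first half cancels
the derivative of `g⁻¹`, and differentiating the mass shell turns the second half into
`-g⁻¹ (u^ν ∂_ρ π_ν)`. What remains is `g^{λρ} u^μ (∂_μ π_ρ - ∂_ρ π_μ)`, and since the second
derivatives of `S` commute, this curl of `π = (dS - q A) / m` is `(q / m) F_{ρμ} u^μ`.
Finally `g(u, u) = π · g⁻¹ π = 1`.
-/

open scoped BigOperators

/-- Partial derivative in the μ-th coordinate direction. -/
noncomputable def pd {ι : Type*} [Fintype ι] [DecidableEq ι] {F : Type*}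
    [NormedAddCommGroup F] [NormedSpace ℝ F]
    (f : (ι → ℝ) → F) (μ : ι) (x : ι → ℝ) : F :=
  fderiv ℝ f x (Pi.single μ 1)

/-- Christoffel symbols Γ[h]^l_{μν} of a matrix field `h`. -/
noncomputable def Chr {ι : Type*} [Fintype ι] [DecidableEq ι]
    (h : (ι → ℝ) → Matrix ι ι ℝ) (l μ ν : ι) (x : ι → ℝ) : ℝ :=
  (1/2) * ∑ ρ : ι, (h x)⁻¹ l ρ *
    (pd (fun z => h z ρ ν) μ x + pd (fun z => h z ρ μ) ν x - pd (fun z => h z μ ν) ρ x)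

/-- Electromagnetic field tensor F_{μν} = ∂_μ A_ν − ∂_ν A_μ. -/
noncomputable def Fem (A : (Fin 4 → ℝ) → Fin 4 → ℝ) (μ ν : Fin 4) (x : Fin 4 → ℝ) : ℝ :=
  pd (fun z => A z ν) μ x - pd (fun z => A z μ) ν x

/-- Kinematical momentum p_μ = ∂_μ S − q A_μ. -/
noncomputable def pDown (S : (Fin 4 → ℝ) → ℝ) (A : (Fin 4 → ℝ) → Fin 4 → ℝ) (q : ℝ)
    (μ : Fin 4) (x : Fin 4 → ℝ) : ℝ :=
  pd S μ x - q * A x μ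

/-- Kinematical momentum with index raised: p^μ = g^{μν} p_ν. -/
noncomputable def pUp (g : (Fin 4 → ℝ) → Matrix (Fin 4) (Fin 4) ℝ)
    (S : (Fin 4 → ℝ) → ℝ) (A : (Fin 4 → ℝ) → Fin 4 → ℝ) (q : ℝ)
    (μ : Fin 4) (x : Fin 4 → ℝ) : ℝ :=
  ∑ ν : Fin 4, (g x)⁻¹ μ ν * pDown S A q ν x

open Matrix

section Algebra

variable {ι : Type*} [Fintype ι]

theorem sum_sum_mul_mul_eq_dotProduct_mulVec (M : Matrix ι ι ℝ) (v w : ι → ℝ) :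
    ∑ μ, ∑ ν, M μ ν * v μ * w ν = v ⬝ᵥ (M *ᵥ w) := by
  simp only [dotProduct, mulVec, Finset.mul_sum]
  exact Finset.sum_congr rfl fun μ _ => Finset.sum_congr rfl fun ν _ => by ring

theorem sum_christoffel_mul_mul (B : Matrix ι ι ℝ) (D : ι → Matrix ι ι ℝ) (a : ι → ℝ) (l : ι) :
    ∑ μ, ∑ ν, (1 / 2 * ∑ ρ, B l ρ * (D μ ρ ν + D ν ρ μ - D ρ μ ν)) * a μ * a ν
      = (B *ᵥ (∑ μ, a μ • (D μ *ᵥ a) - (1 / 2 : ℝ) • fun ρ => a ⬝ᵥ (D ρ *ᵥ a))) l := by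
  have hfirst : ∀ ρ, ∑ μ, ∑ ν, D μ ρ ν * a μ * a ν = ∑ μ, a μ * (D μ *ᵥ a) ρ := fun ρ => by
    simp only [mulVec, dotProduct, Finset.mul_sum]
    exact Finset.sum_congr rfl fun μ _ => Finset.sum_congr rfl fun ν _ => by ring
  have hsecond : ∀ ρ, ∑ μ, ∑ ν, D ν ρ μ * a μ * a ν = ∑ μ, ∑ ν, D μ ρ ν * a μ * a ν :=
    fun ρ => by
      rw [Finset.sum_comm]
      exact Finset.sum_congr rfl fun μ _ => Finset.sum_congr rfl fun ν _ => by ring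
  have hρ : ∀ ρ, (∑ μ, a μ • (D μ *ᵥ a) - (1 / 2 : ℝ) • fun ρ => a ⬝ᵥ (D ρ *ᵥ a)) ρ
      = 1 / 2 * ∑ μ, ∑ ν, (D μ ρ ν + D ν ρ μ - D ρ μ ν) * a μ * a ν := fun ρ => by
    simp only [add_mul, sub_mul, Finset.sum_add_distrib, Finset.sum_sub_distrib]
    rw [hsecond, hfirst, sum_sum_mul_mul_eq_dotProduct_mulVec]
    simp only [Pi.sub_apply, Pi.smul_apply, Finset.sum_apply, smul_eq_mul]
    ring
  change _ = ∑ ρ, B l ρ * _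
  simp only [hρ, Finset.mul_sum, Finset.sum_mul]
  calc _ = ∑ μ, ∑ ρ, ∑ ν, 1 / 2 * (B l ρ * (D μ ρ ν + D ν ρ μ - D ρ μ ν)) * a μ * a ν :=
        Finset.sum_congr rfl fun μ _ => Finset.sum_comm
    _ = ∑ ρ, ∑ μ, ∑ ν, 1 / 2 * (B l ρ * (D μ ρ ν + D ν ρ μ - D ρ μ ν)) * a μ * a ν :=
        Finset.sum_comm
    _ = _ := Finset.sum_congr rfl fun ρ _ => Finset.sum_congr rfl fun μ _ =>
        Finset.sum_congr rfl fun ν _ => by ring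

theorem DifferentiableAt.mulVec_apply {M : (ι → ℝ) → Matrix ι ι ℝ} {v : (ι → ℝ) → ι → ℝ}
    {x : ι → ℝ} (hM : ∀ i j, DifferentiableAt ℝ (fun z => M z i j) x)
    (hv : ∀ j, DifferentiableAt ℝ (fun z => v z j) x) (i : ι) :
    DifferentiableAt ℝ (fun z => (M z *ᵥ v z) i) x :=
  DifferentiableAt.fun_sum fun j _ => (hM i j).mul (hv j)

end Algebra

section PartialDerivative

variable {ι : Type*} [Fintype ι] [DecidableEq ι] {F : Type*} [NormedAddCommGroup F]
  [NormedSpace ℝ F] {f g : (ι → ℝ) → ℝ} {x : ι → ℝ}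

theorem pd_const (c : F) (μ : ι) (x : ι → ℝ) : pd (fun _ : ι → ℝ => c) μ x = 0 := by
  simp [pd]

theorem pd_sub {f g : (ι → ℝ) → F} (hf : DifferentiableAt ℝ f x) (hg : DifferentiableAt ℝ g x)
    (μ : ι) : pd (fun z => f z - g z) μ x = pd f μ x - pd g μ x := by
  simp [pd, fderiv_fun_sub hf hg]

theorem pd_sum {κ : Type*} {s : Finset κ} {f : κ → (ι → ℝ) → F}
    (hf : ∀ k ∈ s, DifferentiableAt ℝ (f k) x) (μ : ι) :
    pd (fun z => ∑ k ∈ s, f k z) μ x = ∑ k ∈ s, pd (f k) μ x := by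
  simp [pd, fderiv_fun_sum hf]

theorem pd_mul (hf : DifferentiableAt ℝ f x) (hg : DifferentiableAt ℝ g x) (μ : ι) :
    pd (fun z => f z * g z) μ x = pd f μ x * g x + f x * pd g μ x := by
  simp [pd, fderiv_fun_mul hf hg]
  ring

theorem pd_const_mul (hf : DifferentiableAt ℝ f x) (c : ℝ) (μ : ι) :
    pd (fun z => c * f z) μ x = c * pd f μ x := by
  simp [pd, fderiv_const_mul hf]

theorem ContDiff.pd {n : WithTop ℕ∞} {f : (ι → ℝ) → F} (hf : ContDiff ℝ (n + 1) f) (μ : ι) :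
    ContDiff ℝ n (pd f μ) :=
  (hf.fderiv_right le_rfl).clm_apply contDiff_const

theorem pd_pd_comm {f : (ι → ℝ) → F} (hf : ContDiff ℝ 2 f) (μ ν : ι) (x : ι → ℝ) :
    pd (pd f ν) μ x = pd (pd f μ) ν x := by
  have hf' : DifferentiableAt ℝ (fderiv ℝ f) x :=
    ((hf.fderiv_right (m := 1) le_rfl).differentiable one_ne_zero).differentiableAt
  have hsecond : ∀ a b : ι, pd (pd f b) a x
      = fderiv ℝ (fderiv ℝ f) x (Pi.single a 1) (Pi.single b 1) := fun a b => by
    change fderiv ℝ (fun z => fderiv ℝ f z (Pi.single b 1)) x _ = _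
    simp [fderiv_clm_apply hf' (differentiableAt_const _)]
  rw [hsecond, hsecond]
  exact (hf.contDiffAt.isSymmSndFDerivAt (by simp)).eq _ _

theorem DifferentiableAt.hasDerivAt_comp_sum_pd {f : (ι → ℝ) → F} {c : ℝ → ι → ℝ} {v : ι → ℝ}
    {s : ℝ} (hf : DifferentiableAt ℝ f (c s)) (hc : ∀ μ, HasDerivAt (fun t => c t μ) (v μ) s) :
    HasDerivAt (fun t => f (c t)) (∑ μ, v μ • pd f μ (c s)) s := by
  refine (hf.hasFDerivAt.comp_hasDerivAt s (hasDerivAt_pi.2 hc)).congr_deriv ?_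
  conv_lhs => rw [← Finset.univ_sum_single v]
  simp only [map_sum, pd]
  refine Finset.sum_congr rfl fun μ _ => ?_
  rw [← map_smul, ← Pi.single_smul', smul_eq_mul, mul_one]

end PartialDerivative

section MatrixInverse

variable {ι : Type*} [Fintype ι] [DecidableEq ι] {E : Type*} [NormedAddCommGroup E]
  [NormedSpace ℝ E] {n : WithTop ℕ∞} {M : E → Matrix ι ι ℝ}

theorem contDiff_det (hM : ∀ i j, ContDiff ℝ n fun x => M x i j) :
    ContDiff ℝ n fun x => (M x).det := by
  simp only [Matrix.det_apply']
  exact ContDiff.sum fun σ _ => contDiff_const.mul (contDiff_prod fun i _ => hM (σ i) i)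

theorem contDiff_inv_apply (hM : ∀ i j, ContDiff ℝ n fun x => M x i j)
    (hdet : ∀ x, IsUnit (M x).det) (i j : ι) : ContDiff ℝ n fun x => (M x)⁻¹ i j := by
  have hadj : ContDiff ℝ n fun x => (M x).adjugate i j := by
    simp only [Matrix.adjugate_apply]
    refine contDiff_det fun a b => ?_
    by_cases hab : a = j
    · subst hab
      simpa using contDiff_const
    · simpa [Matrix.updateRow_ne hab] using hM a b
  simp only [Matrix.inv_def, Ring.inverse_eq_inv', Matrix.smul_apply, smul_eq_mul]
  exact ((contDiff_det hM).inv fun x => (hdet x).ne_zero).mul hadj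

end MatrixInverse

section MatrixField

variable {ι : Type*} [Fintype ι] [DecidableEq ι]

noncomputable def pdMatrix (M : (ι → ℝ) → Matrix ι ι ℝ) (μ : ι) (x : ι → ℝ) : Matrix ι ι ℝ :=
  Matrix.of fun i j => pd (fun z => M z i j) μ x

noncomputable def pdVec (v : (ι → ℝ) → ι → ℝ) (μ : ι) (x : ι → ℝ) : ι → ℝ :=
  fun i => pd (fun z => v z i) μ x

variable {M N : (ι → ℝ) → Matrix ι ι ℝ} {v w : (ι → ℝ) → ι → ℝ} {x : ι → ℝ}

theorem pd_dotProduct (hv : ∀ i, DifferentiableAt ℝ (fun z => v z i) x)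
    (hw : ∀ i, DifferentiableAt ℝ (fun z => w z i) x) (μ : ι) :
    pd (fun z => v z ⬝ᵥ w z) μ x = pdVec v μ x ⬝ᵥ w x + v x ⬝ᵥ pdVec w μ x := by
  simp only [dotProduct]
  rw [pd_sum (f := fun i z => v z i * w z i) fun i _ => (hv i).mul (hw i),
    ← Finset.sum_add_distrib]
  exact Finset.sum_congr rfl fun i _ => pd_mul (hv i) (hw i) μ

theorem pdVec_mulVec (hM : ∀ i j, DifferentiableAt ℝ (fun z => M z i j) x)
    (hv : ∀ j, DifferentiableAt ℝ (fun z => v z j) x) (μ : ι) :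
    pdVec (fun z => M z *ᵥ v z) μ x = pdMatrix M μ x *ᵥ v x + M x *ᵥ pdVec v μ x := by
  ext i
  simp only [pdVec, pdMatrix, mulVec, dotProduct, Pi.add_apply, Matrix.of_apply]
  rw [pd_sum (f := fun j z => M z i j * v z j) fun j _ => (hM i j).mul (hv j),
    ← Finset.sum_add_distrib]
  exact Finset.sum_congr rfl fun j _ => pd_mul (hM i j) (hv j) μ

theorem pdMatrix_mul (hM : ∀ i j, DifferentiableAt ℝ (fun z => M z i j) x)
    (hN : ∀ i j, DifferentiableAt ℝ (fun z => N z i j) x) (μ : ι) :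
    pdMatrix (fun z => M z * N z) μ x = pdMatrix M μ x * N x + M x * pdMatrix N μ x := by
  ext i j
  simp only [pdMatrix, Matrix.mul_apply, Matrix.add_apply, Matrix.of_apply]
  rw [pd_sum (f := fun k z => M z i k * N z k j) fun k _ => (hM i k).mul (hN k j),
    ← Finset.sum_add_distrib]
  exact Finset.sum_congr rfl fun k _ => pd_mul (hM i k) (hN k j) μ

theorem pdMatrix_inv (hM : ∀ i j, DifferentiableAt ℝ (fun z => M z i j) x)
    (hMinv : ∀ i j, DifferentiableAt ℝ (fun z => (M z)⁻¹ i j) x)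
    (hdet : ∀ z, IsUnit (M z).det) (μ : ι) :
    pdMatrix (fun z => (M z)⁻¹) μ x = -((M x)⁻¹ * pdMatrix M μ x * (M x)⁻¹) := by
  have hzero : pdMatrix (fun z => (M z)⁻¹ * M z) μ x = 0 := by
    ext i j
    simp [pdMatrix, Matrix.nonsing_inv_mul _ (hdet _), pd_const]
  rw [pdMatrix_mul hMinv hM, add_eq_zero_iff_eq_neg] at hzero
  calc pdMatrix (fun z => (M z)⁻¹) μ x
      = pdMatrix (fun z => (M z)⁻¹) μ x * M x * (M x)⁻¹ := by
        rw [Matrix.mul_assoc, Matrix.mul_nonsing_inv _ (hdet x), Matrix.mul_one]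
    _ = _ := by rw [hzero, Matrix.neg_mul]

theorem pdVec_inv_mulVec (hM : ∀ i j, DifferentiableAt ℝ (fun z => M z i j) x)
    (hMinv : ∀ i j, DifferentiableAt ℝ (fun z => (M z)⁻¹ i j) x)
    (hdet : ∀ z, IsUnit (M z).det) (hv : ∀ j, DifferentiableAt ℝ (fun z => v z j) x) (μ : ι) :
    pdVec (fun z => (M z)⁻¹ *ᵥ v z) μ x
      = (M x)⁻¹ *ᵥ (pdVec v μ x - pdMatrix M μ x *ᵥ ((M x)⁻¹ *ᵥ v x)) := by
  rw [pdVec_mulVec hMinv hv, pdMatrix_inv hM hMinv hdet, mulVec_sub, Matrix.neg_mulVec,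
    ← Matrix.mulVec_mulVec, ← Matrix.mulVec_mulVec]
  abel

theorem sum_chr_mul_mul (h : (ι → ℝ) → Matrix ι ι ℝ) (x a : ι → ℝ) (l : ι) :
    ∑ μ, ∑ ν, Chr h l μ ν x * a μ * a ν
      = ((h x)⁻¹ *ᵥ (∑ μ, a μ • (pdMatrix h μ x *ᵥ a)
          - (1 / 2 : ℝ) • fun ρ => a ⬝ᵥ (pdMatrix h ρ x *ᵥ a))) l :=
  sum_christoffel_mul_mul _ _ a l

end MatrixField

section IntegralCurve

variable {ι : Type*} [Fintype ι] [DecidableEq ι]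

theorem dotProduct_pdMatrix_mulVec_of_forall_eq {M : (ι → ℝ) → Matrix ι ι ℝ}
    {v : (ι → ℝ) → ι → ℝ} {x : ι → ℝ} {k : ℝ}
    (hM : ∀ i j, DifferentiableAt ℝ (fun z => M z i j) x)
    (hMinv : ∀ i j, DifferentiableAt ℝ (fun z => (M z)⁻¹ i j) x)
    (hdet : ∀ z, IsUnit (M z).det) (hsymm : (M x).IsSymm)
    (hv : ∀ i, DifferentiableAt ℝ (fun z => v z i) x)
    (hk : ∀ z, v z ⬝ᵥ ((M z)⁻¹ *ᵥ v z) = k) (μ : ι) :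
    ((M x)⁻¹ *ᵥ v x) ⬝ᵥ (pdMatrix M μ x *ᵥ ((M x)⁻¹ *ᵥ v x))
      = 2 * (((M x)⁻¹ *ᵥ v x) ⬝ᵥ pdVec v μ x) := by
  have hzero : pd (fun z => v z ⬝ᵥ ((M z)⁻¹ *ᵥ v z)) μ x = 0 := by
    simp only [hk, pd_const]
  rw [pd_dotProduct hv (DifferentiableAt.mulVec_apply hMinv hv),
    pdVec_inv_mulVec hM hMinv hdet hv, dotProduct_mulVec (v x), ← mulVec_transpose, hsymm.inv.eq,
    dotProduct_sub, dotProduct_comm (pdVec v μ x)] at hzero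
  linarith

theorem deriv_deriv_of_forall_hasDerivAt {V : (ι → ℝ) → ι → ℝ} {c : ℝ → ι → ℝ} {I : Set ℝ}
    {s : ℝ} (hI : IsOpen I) (hs : s ∈ I)
    (hc : ∀ t ∈ I, ∀ μ, HasDerivAt (fun t => c t μ) (V (c t) μ) t)
    (hV : ∀ i, DifferentiableAt ℝ (fun z => V z i) (c s)) (l : ι) :
    deriv (fun t => deriv (fun w => c w l) t) s = (∑ μ, V (c s) μ • pdVec V μ (c s)) l := by
  have hvelocity : (fun t => deriv (fun w => c w l) t) =ᶠ[nhds s] fun t => V (c t) l := by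
    filter_upwards [hI.mem_nhds hs] with t ht
    exact (hc t ht l).deriv
  rw [hvelocity.deriv_eq, ((hV l).hasDerivAt_comp_sum_pd (hc s hs)).deriv]
  simp [pdVec, Finset.sum_apply]

theorem dotProduct_mulVec_inv_mulVec {G : Matrix ι ι ℝ} (hG : IsUnit G.det) (v : ι → ℝ) :
    (G⁻¹ *ᵥ v) ⬝ᵥ (G *ᵥ (G⁻¹ *ᵥ v)) = v ⬝ᵥ (G⁻¹ *ᵥ v) := by
  rw [mulVec_mulVec, mul_nonsing_inv _ hG, one_mulVec, dotProduct_comm]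

variable {G : (ι → ℝ) → Matrix ι ι ℝ} {π : (ι → ℝ) → ι → ℝ} {c : ℝ → ι → ℝ} {I : Set ℝ} {s k : ℝ}

theorem deriv_deriv_add_sum_chr_eq_mulVec_curl
    (hG : ∀ i j, ContDiff ℝ 1 fun z => G z i j) (hdet : ∀ z, IsUnit (G z).det)
    (hsymm : (G (c s)).IsSymm) (hπ : ∀ i, DifferentiableAt ℝ (fun z => π z i) (c s))
    (hk : ∀ z, π z ⬝ᵥ ((G z)⁻¹ *ᵥ π z) = k) (hI : IsOpen I) (hs : s ∈ I)
    (hc : ∀ t ∈ I, ∀ μ, HasDerivAt (fun t => c t μ) (((G (c t))⁻¹ *ᵥ π (c t)) μ) t) (l : ι) :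
    deriv (fun t => deriv (fun w => c w l) t) s
        + ∑ μ, ∑ ν, Chr G l μ ν (c s) * deriv (fun w => c w μ) s * deriv (fun w => c w ν) s
      = ((G (c s))⁻¹ *ᵥ fun ρ => ∑ μ, (pdVec π μ (c s) ρ - pdVec π ρ (c s) μ)
          * deriv (fun w => c w μ) s) l := by
  have hGd : ∀ i j, DifferentiableAt ℝ (fun z => G z i j) (c s) := fun i j =>
    ((hG i j).differentiable one_ne_zero).differentiableAt
  have hGinvd : ∀ i j, DifferentiableAt ℝ (fun z => (G z)⁻¹ i j) (c s) := fun i j =>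
    ((contDiff_inv_apply hG hdet i j).differentiable one_ne_zero).differentiableAt
  have hvelocity : ∀ μ, deriv (fun w => c w μ) s = ((G (c s))⁻¹ *ᵥ π (c s)) μ := fun μ =>
    (hc s hs μ).deriv
  have hmass := dotProduct_pdMatrix_mulVec_of_forall_eq hGd hGinvd hdet hsymm hπ hk
  have hacc := deriv_deriv_of_forall_hasDerivAt hI hs hc (DifferentiableAt.mulVec_apply hGinvd hπ) l
  simp only [pdVec_inv_mulVec hGd hGinvd hdet hπ, ← mulVec_smul, ← mulVec_sum] at hacc
  set u := (G (c s))⁻¹ *ᵥ π (c s)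
  simp only [hvelocity]
  rw [hacc, sum_chr_mul_mul, ← Pi.add_apply, ← mulVec_add]
  congr 2
  -- Half of the Christoffel term cancels the derivative of `G⁻¹` in the acceleration.
  have hsum : ∑ μ, u μ • (pdVec π μ (c s) - pdMatrix G μ (c s) *ᵥ u)
        + (∑ μ, u μ • (pdMatrix G μ (c s) *ᵥ u)
          - (1 / 2 : ℝ) • fun ρ => u ⬝ᵥ (pdMatrix G ρ (c s) *ᵥ u))
      = ∑ μ, u μ • pdVec π μ (c s) - (1 / 2 : ℝ) • fun ρ => u ⬝ᵥ (pdMatrix G ρ (c s) *ᵥ u) := by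
    simp only [smul_sub, Finset.sum_sub_distrib]
    abel
  rw [hsum]
  ext ρ
  simp only [Pi.sub_apply, Pi.smul_apply, Finset.sum_apply, smul_eq_mul, hmass]
  simp only [dotProduct, sub_mul, Finset.sum_sub_distrib, mul_comm (u _)]
  ring

end IntegralCurve

section KinematicalMomentum

variable {S : (Fin 4 → ℝ) → ℝ} {A : (Fin 4 → ℝ) → Fin 4 → ℝ} {q : ℝ}

theorem differentiable_pDown (hS : ContDiff ℝ 2 S) (hA : ∀ μ, Differentiable ℝ fun x => A x μ)
    (ν : Fin 4) : Differentiable ℝ (pDown S A q ν) :=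
  ((hS.pd ν).differentiable one_ne_zero).sub ((hA ν).const_mul q)

theorem pd_pDown_sub_pd_pDown (hS : ContDiff ℝ 2 S) (hA : ∀ μ, Differentiable ℝ fun x => A x μ)
    (x : Fin 4 → ℝ) (μ ν : Fin 4) :
    pd (pDown S A q ν) μ x - pd (pDown S A q μ) ν x = q * Fem A ν μ x := by
  have hpd : ∀ μ ν, pd (pDown S A q ν) μ x = pd (pd S ν) μ x - q * pd (fun z => A z ν) μ x :=
    fun μ ν => by
      rw [show pDown S A q ν = fun z => pd S ν z - q * A z ν from rfl,
        pd_sub (((hS.pd ν).differentiable one_ne_zero) x) (((hA ν).const_mul q) x),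
        pd_const_mul (hA ν x)]
  rw [hpd, hpd, pd_pd_comm hS, Fem]
  ring

/-- Raised by `g`, the covector `p_μ / m` is the velocity field of the curve. -/
noncomputable def normalizedMomentum (S : (Fin 4 → ℝ) → ℝ) (A : (Fin 4 → ℝ) → Fin 4 → ℝ)
    (q m : ℝ) (x : Fin 4 → ℝ) : Fin 4 → ℝ :=
  fun ν => m⁻¹ * pDown S A q ν x

variable {m : ℝ}

theorem inv_mulVec_normalizedMomentum (g : (Fin 4 → ℝ) → Matrix (Fin 4) (Fin 4) ℝ)
    (x : Fin 4 → ℝ) (μ : Fin 4) :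
    ((g x)⁻¹ *ᵥ normalizedMomentum S A q m x) μ = pUp g S A q μ x / m := by
  simp only [normalizedMomentum, mulVec, dotProduct, pUp, Finset.sum_div]
  exact Finset.sum_congr rfl fun ν _ => by field_simp

theorem normalizedMomentum_dotProduct_inv_mulVec {g : (Fin 4 → ℝ) → Matrix (Fin 4) (Fin 4) ℝ}
    (hm : m ≠ 0) {x : Fin 4 → ℝ}
    (hmass : ∑ μ, ∑ ν, (g x)⁻¹ μ ν * pDown S A q μ x * pDown S A q ν x = m ^ 2) :
    normalizedMomentum S A q m x ⬝ᵥ ((g x)⁻¹ *ᵥ normalizedMomentum S A q m x) = 1 := by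
  rw [show normalizedMomentum S A q m x = m⁻¹ • fun ν => pDown S A q ν x from rfl, mulVec_smul,
    smul_dotProduct, dotProduct_smul, ← sum_sum_mul_mul_eq_dotProduct_mulVec, hmass,
    smul_eq_mul, smul_eq_mul]
  field_simp

theorem pdVec_normalizedMomentum_sub (hS : ContDiff ℝ 2 S)
    (hA : ∀ μ, Differentiable ℝ fun x => A x μ) (x : Fin 4 → ℝ) (μ ρ : Fin 4) :
    pdVec (normalizedMomentum S A q m) μ x ρ - pdVec (normalizedMomentum S A q m) ρ x μ
      = q / m * Fem A ρ μ x := by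
  simp only [pdVec, normalizedMomentum]
  rw [pd_const_mul (differentiable_pDown hS hA ρ x), pd_const_mul (differentiable_pDown hS hA μ x),
    ← mul_sub, pd_pDown_sub_pd_pDown hS hA]
  ring

end KinematicalMomentum

theorem integral_curve_lorentz_force_general
    (g : (Fin 4 → ℝ) → Matrix (Fin 4) (Fin 4) ℝ)
    (S : (Fin 4 → ℝ) → ℝ) (A : (Fin 4 → ℝ) → Fin 4 → ℝ) (q : ℝ)
    (hg : ∀ μ ν, ContDiff ℝ (⊤ : ℕ∞) (fun x => g x μ ν))
    (hgsymm : ∀ x, (g x).IsSymm)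
    (hginv : ∀ x, IsUnit (g x).det)
    (hS : ContDiff ℝ (⊤ : ℕ∞) S)
    (hA : ∀ μ, ContDiff ℝ (⊤ : ℕ∞) (fun x => A x μ))
    (m : ℝ) (hm : 0 < m)
    (hmass : ∀ x : Fin 4 → ℝ,
      ∑ μ : Fin 4, ∑ ν : Fin 4, (g x)⁻¹ μ ν * pDown S A q μ x * pDown S A q ν x = m^2)
    (I : Set ℝ) (hI : IsOpen I)
    (x : ℝ → Fin 4 → ℝ)
    -- x is an integral curve of p^μ/m
    (hint : ∀ s ∈ I, ∀ μ : Fin 4,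
      HasDerivAt (fun u => x u μ) (pUp g S A q μ (x s) / m) s) :
    ∀ s ∈ I,
      (∀ l : Fin 4,
        deriv (fun u => deriv (fun w => x w l) u) s
          + ∑ μ : Fin 4, ∑ ν : Fin 4, Chr g l μ ν (x s)
              * deriv (fun w => x w μ) s * deriv (fun w => x w ν) s
        = (q / m) * ∑ γ : Fin 4, (g (x s))⁻¹ l γ
              * ∑ ν : Fin 4, Fem A γ ν (x s) * deriv (fun w => x w ν) s) ∧
      (∑ μ : Fin 4, ∑ ν : Fin 4, g (x s) μ ν
          * deriv (fun w => x w μ) s * deriv (fun w => x w ν) s = 1) := by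
  intro s hs
  have hS2 : ContDiff ℝ 2 S := hS.of_le (by norm_cast)
  have hAd : ∀ μ, Differentiable ℝ fun z => A z μ := fun μ => (hA μ).differentiable (by simp)
  set π := normalizedMomentum S A q m with hπ_def
  have hπ : ∀ ν, DifferentiableAt ℝ (fun z => π z ν) (x s) := fun ν =>
    ((differentiable_pDown hS2 hAd ν).const_mul _).differentiableAt
  have hcurve : ∀ t ∈ I, ∀ μ, HasDerivAt (fun u => x u μ) (((g (x t))⁻¹ *ᵥ π (x t)) μ) t :=
    fun t ht μ => by simpa only [hπ_def, inv_mulVec_normalizedMomentum] using hint t ht μ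
  have hunit : ∀ z, π z ⬝ᵥ ((g z)⁻¹ *ᵥ π z) = 1 := fun z =>
    normalizedMomentum_dotProduct_inv_mulVec hm.ne' (hmass z)
  refine ⟨fun l => ?_, ?_⟩
  · rw [deriv_deriv_add_sum_chr_eq_mulVec_curl (fun μ ν => (hg μ ν).of_le (by norm_cast)) hginv
      (hgsymm _) hπ hunit hI hs hcurve]
    simp only [mulVec, dotProduct, Finset.mul_sum, hπ_def, pdVec_normalizedMomentum_sub hS2 hAd]
    exact Finset.sum_congr rfl fun γ _ => Finset.sum_congr rfl fun ν _ => by ring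
  · have hvelocity : (fun μ => deriv (fun w => x w μ) s) = (g (x s))⁻¹ *ᵥ π (x s) :=
      funext fun μ => (hcurve s hs μ).deriv
    rw [sum_sum_mul_mul_eq_dotProduct_mulVec, hvelocity, dotProduct_mulVec_inv_mulVec (hginv _),
      hunit]

/-- if g^{μν} p_μ p_ν = m² with m > 0, then integral curves of p^μ/m satisfy
the Lorentz force equation with charge-to-mass ratio q/m, and are parametrized by proper
time: g_{μν} ẋ^μ ẋ^ν = 1. -/
theorem integral_curve_lorentz_force
    (g : (Fin 4 → ℝ) → Matrix (Fin 4) (Fin 4) ℝ)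
    (S : (Fin 4 → ℝ) → ℝ) (A : (Fin 4 → ℝ) → Fin 4 → ℝ) (q : ℝ)
    (hg : ∀ μ ν, ContDiff ℝ (⊤ : ℕ∞) (fun x => g x μ ν))
    (hgsymm : ∀ x, (g x).IsSymm)
    (hginv : ∀ x, IsUnit (g x).det)
    (hS : ContDiff ℝ (⊤ : ℕ∞) S)
    (hA : ∀ μ, ContDiff ℝ (⊤ : ℕ∞) (fun x => A x μ))
    (m : ℝ) (hm : 0 < m)
    (hmass : ∀ x : Fin 4 → ℝ,
      ∑ μ : Fin 4, ∑ ν : Fin 4, (g x)⁻¹ μ ν * pDown S A q μ x * pDown S A q ν x = m^2)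
    (I : Set ℝ) (hI : IsOpen I) (hIconn : I.OrdConnected)
    (x : ℝ → Fin 4 → ℝ)
    -- x is an integral curve of p^μ/m
    (hint : ∀ s ∈ I, ∀ μ : Fin 4,
      HasDerivAt (fun u => x u μ) (pUp g S A q μ (x s) / m) s) :
    ∀ s ∈ I,
      (∀ l : Fin 4,
        deriv (fun u => deriv (fun w => x w l) u) s
          + ∑ μ : Fin 4, ∑ ν : Fin 4, Chr g l μ ν (x s)
              * deriv (fun w => x w μ) s * deriv (fun w => x w ν) s
        = (q / m) * ∑ γ : Fin 4, (g (x s))⁻¹ l γ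
              * ∑ ν : Fin 4, Fem A γ ν (x s) * deriv (fun w => x w ν) s) ∧
      (∑ μ : Fin 4, ∑ ν : Fin 4, g (x s) μ ν
          * deriv (fun w => x w μ) s * deriv (fun w => x w ν) s = 1) :=
  integral_curve_lorentz_force_general g S A q hg hgsymm hginv hS hA m hm hmass I hI x hint
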